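/- In the Golub–Kahan bidiagonalization setup, for every k with 1 ≤ k ≤ n−1, the singular values θ_1^{(k)} > θ_2^{(k)} > ⋯ > θ_k^{(k)} of B_k strictly interlace the singular values of A: for every i with 1 ≤ i ≤ k one has σ_{n−k+i} < θ_i^{(k)} < σ_i. -/

import Mathlib

/-!
By the Eckart–Young theorem, `singVal M (i + 1)` is the `i`-th singular value of `M`, so its
square is a root of the characteristic polynomial of `Mᵀ * M`. For the lower bidiagonal `B_k`,
`B_kᵀ * B_k` is symmetric tridiagonal with off-diagonal entries `β_i α_{i+1} ≠ 0`, and the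
three-term recurrence for its characteristic polynomial shows that those of `B_k` and `B_{k+1}`
have no common root.

Directly from the rank-minimising definition of `singVal`, `B_k` is a submatrix of `B_{k+1}`, and
(up to a zero row) `B_{k+1}` with its last column deleted; this gives the weak interlacing
`θ^{(k+1)}_{i+1} ≤ θ^{(k)}_i ≤ θ^{(k+1)}_i`, which the absence of common roots makes strict.
Chaining from `k` to `n` gives the claim, since `A = P B Qᵀ` has the singular values of `B = B_n`.
-/

open Matrix

/-- Spectral norm (largest singular value) of a real matrix. -/
noncomputable def specNorm {a b : ℕ} (M : Matrix (Fin a) (Fin b) ℝ) : ℝ :=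
  ‖LinearMap.toContinuousLinearMap (Matrix.toEuclideanLin M)‖

/-- The `j`-th largest singular value of a real matrix (`j ≥ 1`), characterized via the
Eckart–Young theorem as the minimal spectral-norm distance to matrices of rank `< j`;
it is `0` when `j` exceeds the smaller dimension. -/
noncomputable def singVal {a b : ℕ} (M : Matrix (Fin a) (Fin b) ℝ) (j : ℕ) : ℝ :=
  sInf {r : ℝ | ∃ D : Matrix (Fin a) (Fin b) ℝ, D.rank < j ∧ r = specNorm (M - D)}

/-- The matrix of the first `k` columns of `M`. -/
def colSub {a b : ℕ} (M : Matrix (Fin a) (Fin b) ℝ) (k : ℕ) (hk : k ≤ b) :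
    Matrix (Fin a) (Fin k) ℝ :=
  M.submatrix id fun j => ⟨j.1, lt_of_lt_of_le j.2 hk⟩

/-- The leading `r × c` submatrix of `M`. -/
def subUL {a b : ℕ} (M : Matrix (Fin a) (Fin b) ℝ) (r c : ℕ) (hr : r ≤ a) (hc : c ≤ b) :
    Matrix (Fin r) (Fin c) ℝ :=
  M.submatrix (fun i => ⟨i.1, lt_of_lt_of_le i.2 hr⟩) (fun j => ⟨j.1, lt_of_lt_of_le j.2 hc⟩)

open scoped Matrix.Norms.L2Operator RealInnerProductSpace

namespace Matrix

variable {R : Type*} {l m n : Type*} [Fintype n]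

theorem l2_opNorm_transpose [Fintype m] [DecidableEq m] [DecidableEq n] (A : Matrix m n ℝ) :
    ‖Aᵀ‖ = ‖A‖ := by
  simpa using l2_opNorm_conjTranspose A

theorem l2_opNorm_le_one_of_transpose_mul_self [Fintype m] [DecidableEq n] {U : Matrix m n ℝ}
    (hU : Uᵀ * U = 1) : ‖U‖ ≤ 1 := by
  have h1 : ‖(1 : Matrix n n ℝ)‖ ≤ 1 := by
    rw [cstar_norm_def, map_one]
    exact ContinuousLinearMap.norm_id_le
  have := l2_opNorm_conjTranspose_mul_self U
  rw [conjTranspose_eq_transpose_of_trivial, hU] at this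
  nlinarith [norm_nonneg U]

theorem transpose_one_submatrix_id_mul [NonAssocSemiring R] [DecidableEq l] [DecidableEq n]
    {f : l → n} (hf : f.Injective) :
    ((1 : Matrix n n R).submatrix id f)ᵀ * (1 : Matrix n n R).submatrix id f = 1 := by
  rw [transpose_submatrix, transpose_one, ← submatrix_mul _ _ _ _ _ Function.bijective_id,
    Matrix.one_mul, submatrix_one _ hf]

theorem l2_opNorm_one_submatrix_le_one [Fintype l] [DecidableEq l] [DecidableEq n] {f : l → n}
    (hf : f.Injective) : ‖(1 : Matrix n n ℝ).submatrix f id‖ ≤ 1 := by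
  rw [show (1 : Matrix n n ℝ).submatrix f id = ((1 : Matrix n n ℝ).submatrix id f)ᵀ by
    rw [transpose_submatrix, transpose_one], l2_opNorm_transpose]
  exact l2_opNorm_le_one_of_transpose_mul_self (transpose_one_submatrix_id_mul hf)

theorem submatrix_eq_one_submatrix_mul_mul [NonAssocSemiring R] [Fintype m] [DecidableEq m]
    [DecidableEq n] {o : Type*} (A : Matrix m n R) (r : l → m) (c : o → n) :
    A.submatrix r c =
      (1 : Matrix m m R).submatrix r id * A * (1 : Matrix n n R).submatrix id c := by
  ext i j
  simp [mul_apply, one_apply]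

theorem eq_submatrix_castSucc_mul_add_vecMulVec [NonAssocSemiring R] {a b : ℕ}
    (M : Matrix (Fin a) (Fin (b + 1)) R) :
    M = M.submatrix id Fin.castSucc *
          (1 : Matrix (Fin (b + 1)) (Fin (b + 1)) R).submatrix Fin.castSucc id +
        vecMulVec (fun i => M i (Fin.last b)) (Pi.single (Fin.last b) 1) := by
  ext i c
  induction c using Fin.lastCases <;> simp [mul_apply, vecMulVec_apply, one_apply]

theorem rank_add_le [Field R] (A B : Matrix m n R) : (A + B).rank ≤ A.rank + B.rank := by
  unfold rank
  rw [mulVecLin_add]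
  exact (Submodule.finrank_mono (LinearMap.range_add_le _ _)).trans
    (Submodule.finrank_add_le_finrank_add_finrank _ _)

theorem rank_eq_finrank_range_toEuclideanLin [Fintype m] [DecidableEq n] (A : Matrix m n ℝ) :
    A.rank = Module.finrank ℝ (LinearMap.range (toEuclideanLin A)) := by
  rw [rank_eq_finrank_range_toLin A (PiLp.basisFun 2 ℝ m) (PiLp.basisFun 2 ℝ n)]
  rfl

theorem l2_opNorm_sub_eq_opNorm_toEuclideanLin_sub [Fintype m] [DecidableEq n]
    (A B : Matrix m n ℝ) :
    ‖A - B‖ = ‖(toEuclideanLin A - toEuclideanLin B).toContinuousLinearMap‖ := by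
  rw [l2_opNorm_def, LinearEquiv.trans_apply, map_sub]

theorem charpoly_toEuclideanLin [DecidableEq n] (A : Matrix n n ℝ) :
    (toEuclideanLin A).charpoly = A.charpoly :=
  charpoly_toLin A (PiLp.basisFun 2 ℝ n)

end Matrix

namespace LinearMap

variable {E F : Type*} [NormedAddCommGroup E] [InnerProductSpace ℝ E] [FiniteDimensional ℝ E]
  [NormedAddCommGroup F] [InnerProductSpace ℝ F] [FiniteDimensional ℝ F] (T : E →ₗ[ℝ] F)

open Module

noncomputable def rightSingularVectors : OrthonormalBasis (Fin (finrank ℝ E)) ℝ E :=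
  T.isSymmetric_adjoint_comp_self.eigenvectorBasis rfl

theorem adjoint_apply_apply_rightSingularVectors (k : Fin (finrank ℝ E)) :
    adjoint T (T (T.rightSingularVectors k)) =
      T.singularValues k ^ 2 • T.rightSingularVectors k := by
  rw [T.sq_singularValues_fin rfl]
  exact T.isSymmetric_adjoint_comp_self.apply_eigenvectorBasis rfl k

theorem norm_apply_sq_eq_sum (x : E) :
    ‖T x‖ ^ 2 = ∑ k : Fin (finrank ℝ E),
      T.singularValues k ^ 2 * ⟪T.rightSingularVectors k, x⟫ ^ 2 := by
  rw [← real_inner_self_eq_norm_sq, ← adjoint_inner_right,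
    ← T.rightSingularVectors.sum_inner_mul_inner]
  refine Finset.sum_congr rfl fun k _ => ?_
  rw [adjoint_inner_right, ← adjoint_inner_left, adjoint_apply_apply_rightSingularVectors,
    real_inner_smul_left, real_inner_comm]
  ring

theorem sq_singularValues_le_sq {k l : ℕ} (h : k ≤ l) :
    T.singularValues l ^ 2 ≤ T.singularValues k ^ 2 :=
  pow_le_pow_left₀ (T.singularValues_nonneg l) (T.singularValues_antitone h) 2

theorem norm_apply_le_of_forall_lt_inner_eq_zero {i : Fin (finrank ℝ E)} {x : E}
    (hx : ∀ k < i, ⟪T.rightSingularVectors k, x⟫ = 0) :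
    ‖T x‖ ≤ T.singularValues i * ‖x‖ := by
  refine (pow_le_pow_iff_left₀ (norm_nonneg _)
    (mul_nonneg (T.singularValues_nonneg i) (norm_nonneg x)) two_ne_zero).1 ?_
  rw [norm_apply_sq_eq_sum, mul_pow, ← T.rightSingularVectors.sum_sq_inner_right x,
    Finset.mul_sum]
  refine Finset.sum_le_sum fun k _ => ?_
  rcases lt_or_ge k i with hk | hk
  · simp [hx k hk]
  · exact mul_le_mul_of_nonneg_right (T.sq_singularValues_le_sq hk) (sq_nonneg _)

theorem singularValues_mul_norm_le_of_forall_gt_inner_eq_zero {i : Fin (finrank ℝ E)} {x : E}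
    (hx : ∀ k, i < k → ⟪T.rightSingularVectors k, x⟫ = 0) :
    T.singularValues i * ‖x‖ ≤ ‖T x‖ := by
  refine (pow_le_pow_iff_left₀ (mul_nonneg (T.singularValues_nonneg i) (norm_nonneg x))
    (norm_nonneg _) two_ne_zero).1 ?_
  rw [norm_apply_sq_eq_sum, mul_pow, ← T.rightSingularVectors.sum_sq_inner_right x,
    Finset.mul_sum]
  refine Finset.sum_le_sum fun k _ => ?_
  rcases lt_or_ge i k with hk | hk
  · simp [hx k hk]
  · exact mul_le_mul_of_nonneg_right (T.sq_singularValues_le_sq hk) (sq_nonneg _)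

theorem singularValues_le_opNorm_sub (D : E →ₗ[ℝ] F) {i : ℕ} (hD : finrank ℝ (range D) ≤ i) :
    T.singularValues i ≤ ‖(T - D).toContinuousLinearMap‖ := by
  rcases lt_or_ge i (finrank ℝ E) with hi | hi
  swap
  · rw [T.singularValues_of_finrank_le hi]
    exact norm_nonneg _
  -- `ker D` meets the span of the first `i + 1` right singular vectors, on which `T` stretches
  -- every vector by at least `σᵢ`
  set v := T.rightSingularVectors
  set W := Submodule.span ℝ (Set.range (v ∘ Fin.castLE (n := i + 1) hi))
  have hW : finrank ℝ W = i + 1 := by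
    rw [finrank_span_eq_card (v.orthonormal.linearIndependent.comp _ (Fin.castLE_injective hi)),
      Fintype.card_fin]
  obtain ⟨⟨x, hxW⟩, hx, hx0⟩ := (Submodule.ne_bot_iff _).1
    (ker_ne_bot_of_finrank_lt (f := D.rangeRestrict ∘ₗ W.subtype) (by omega))
  have hDx : D x = 0 := congrArg Subtype.val hx
  have hx0 : x ≠ 0 := fun h => hx0 (Subtype.ext h)
  have horth : ∀ k, ⟨i, hi⟩ < k → ⟪v k, x⟫ = 0 := by
    intro k hk
    refine Submodule.mem_orthogonal_singleton_iff_inner_right.1 (Submodule.span_le.2 ?_ hxW)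
    rintro _ ⟨l, rfl⟩
    refine Submodule.mem_orthogonal_singleton_iff_inner_right.2 (v.orthonormal.2 ?_)
    exact fun h => (Fin.lt_def.1 hk).not_ge (by rw [h]; exact Nat.lt_succ_iff.1 l.2)
  have hle := (T.singularValues_mul_norm_le_of_forall_gt_inner_eq_zero horth).trans
    (le_of_eq_of_le (by simp [hDx]) ((T - D).toContinuousLinearMap.le_opNorm x))
  exact le_of_mul_le_mul_right hle (norm_pos_iff.2 hx0)

theorem exists_finrank_range_le_opNorm_sub_le (i : ℕ) :
    ∃ D : E →ₗ[ℝ] F, finrank ℝ (range D) ≤ i ∧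
      ‖(T - D).toContinuousLinearMap‖ ≤ T.singularValues i := by
  rcases lt_or_ge i (finrank ℝ E) with hi | hi
  swap
  · refine ⟨T, (finrank_range_le T).trans hi, ?_⟩
    simpa using T.singularValues_nonneg i
  set v := T.rightSingularVectors
  set K := Submodule.span ℝ (Set.range (v ∘ Fin.castLE (n := i) hi.le))
  refine ⟨T ∘ₗ K.starProjection.toLinearMap, ?_, ?_⟩
  · calc finrank ℝ (range (T ∘ₗ K.starProjection.toLinearMap)) ≤ finrank ℝ (K.map T) := by
          refine Submodule.finrank_mono ?_
          rintro _ ⟨x, rfl⟩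
          exact ⟨_, K.starProjection_apply_mem x, rfl⟩
      _ ≤ finrank ℝ K := Submodule.finrank_map_le T K
      _ ≤ i := (finrank_range_le_card _).trans (Fintype.card_fin i).le
  refine ContinuousLinearMap.opNorm_le_bound _ (T.singularValues_nonneg i) fun x => ?_
  set y := Kᗮ.starProjection x
  have hy : ∀ k < (⟨i, hi⟩ : Fin _), ⟪v k, y⟫ = 0 := fun k hk =>
    Submodule.inner_right_of_mem_orthogonal
      (Submodule.subset_span (Set.mem_range.2 ⟨⟨k, hk⟩, rfl⟩)) (Kᗮ.starProjection_apply_mem x)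
  calc ‖(T - T ∘ₗ K.starProjection.toLinearMap).toContinuousLinearMap x‖ = ‖T y‖ := by
        simp [y, K.starProjection_orthogonal_val]
    _ ≤ T.singularValues i * ‖y‖ := T.norm_apply_le_of_forall_lt_inner_eq_zero hy
    _ ≤ T.singularValues i * ‖x‖ := by
        gcongr
        · exact T.singularValues_nonneg i
        · exact Kᗮ.norm_starProjection_apply_le x

end LinearMap

section SingVal

variable {a b a' b' : ℕ}

theorem specNorm_eq_l2_opNorm (M : Matrix (Fin a) (Fin b) ℝ) : specNorm M = ‖M‖ := rfl

theorem singVal_le_l2_opNorm_sub (M : Matrix (Fin a) (Fin b) ℝ) {D : Matrix (Fin a) (Fin b) ℝ}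
    {j : ℕ} (hD : D.rank < j) : singVal M j ≤ ‖M - D‖ :=
  csInf_le ⟨0, by rintro r ⟨D, -, rfl⟩; exact norm_nonneg _⟩
    ⟨D, hD, specNorm_eq_l2_opNorm _⟩

theorem le_singVal (M : Matrix (Fin a) (Fin b) ℝ) {j : ℕ} (hj : 0 < j) {r : ℝ}
    (h : ∀ D : Matrix (Fin a) (Fin b) ℝ, D.rank < j → r ≤ ‖M - D‖) : r ≤ singVal M j := by
  refine le_csInf ⟨_, 0, by rwa [rank_zero], rfl⟩ ?_
  rintro s ⟨D, hD, rfl⟩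
  rw [specNorm_eq_l2_opNorm]
  exact h D hD

theorem singVal_mul_mul_le {L : Matrix (Fin a') (Fin a) ℝ} {R : Matrix (Fin b) (Fin b') ℝ}
    (hL : ‖L‖ ≤ 1) (hR : ‖R‖ ≤ 1) (M : Matrix (Fin a) (Fin b) ℝ) {j : ℕ} (hj : 0 < j) :
    singVal (L * M * R) j ≤ singVal M j := by
  refine le_singVal M hj fun D hD => ?_
  have hrank : (L * D * R).rank < j :=
    ((rank_mul_le_left _ R).trans (rank_mul_le_right L D)).trans_lt hD
  calc singVal (L * M * R) j ≤ ‖L * M * R - L * D * R‖ := singVal_le_l2_opNorm_sub _ hrank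
    _ = ‖L * (M - D) * R‖ := by rw [Matrix.mul_sub, Matrix.sub_mul]
    _ ≤ ‖L‖ * ‖M - D‖ * ‖R‖ :=
      (l2_opNorm_mul _ _).trans (by gcongr; exact l2_opNorm_mul _ _)
    _ ≤ 1 * ‖M - D‖ * 1 := by gcongr
    _ = ‖M - D‖ := by ring

theorem singVal_mul_mul_transpose {U : Matrix (Fin a) (Fin a') ℝ} (hU : Uᵀ * U = 1)
    {V : Matrix (Fin b) (Fin b') ℝ} (hV : Vᵀ * V = 1) (N : Matrix (Fin a') (Fin b') ℝ) {j : ℕ}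
    (hj : 0 < j) : singVal (U * N * Vᵀ) j = singVal N j := by
  have hU1 := l2_opNorm_le_one_of_transpose_mul_self hU
  have hV1 := l2_opNorm_le_one_of_transpose_mul_self hV
  refine le_antisymm (singVal_mul_mul_le hU1 (by rwa [l2_opNorm_transpose]) N hj) ?_
  calc singVal N j = singVal (Uᵀ * (U * N * Vᵀ) * V) j := by
        simp only [Matrix.mul_assoc, hV, Matrix.mul_one, ← Matrix.mul_assoc Uᵀ, hU,
          Matrix.one_mul]
    _ ≤ singVal (U * N * Vᵀ) j := singVal_mul_mul_le (by rwa [l2_opNorm_transpose]) hV1 _ hj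

theorem singVal_submatrix_le (M : Matrix (Fin a) (Fin b) ℝ) {r : Fin a' → Fin a}
    {c : Fin b' → Fin b} (hr : r.Injective) (hc : c.Injective) {j : ℕ} (hj : 0 < j) :
    singVal (M.submatrix r c) j ≤ singVal M j := by
  rw [submatrix_eq_one_submatrix_mul_mul]
  refine singVal_mul_mul_le (l2_opNorm_one_submatrix_le_one hr) ?_ M hj
  rw [← l2_opNorm_transpose, transpose_submatrix, transpose_one]
  exact l2_opNorm_one_submatrix_le_one hc

theorem singVal_add_one_le_singVal_submatrix_castSucc (M : Matrix (Fin a) (Fin (b + 1)) ℝ)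
    {j : ℕ} (hj : 0 < j) : singVal M (j + 1) ≤ singVal (M.submatrix id Fin.castSucc) j := by
  set S := (1 : Matrix (Fin (b + 1)) (Fin (b + 1)) ℝ).submatrix Fin.castSucc id
  set Y := vecMulVec (fun i => M i (Fin.last b)) (Pi.single (Fin.last b) (1 : ℝ))
  -- padding an approximation `D` of the truncated matrix with the deleted column `Y` raises its
  -- rank by at most one and keeps the error
  have hM : M = M.submatrix id Fin.castSucc * S + Y := eq_submatrix_castSucc_mul_add_vecMulVec M
  refine le_singVal _ hj fun D hD => ?_
  have hrank : (D * S + Y).rank < j + 1 :=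
    ((rank_add_le _ _).trans (add_le_add (rank_mul_le_left _ _) (rank_vecMulVec_le _ _))).trans_lt
      (by omega)
  calc singVal M (j + 1) ≤ ‖M - (D * S + Y)‖ := singVal_le_l2_opNorm_sub M hrank
    _ = ‖(M.submatrix id Fin.castSucc - D) * S‖ := by
        conv_lhs => rw [hM]
        rw [add_sub_add_right_eq_sub, Matrix.sub_mul]
    _ ≤ ‖M.submatrix id Fin.castSucc - D‖ * 1 :=
        (l2_opNorm_mul _ _).trans
          (by gcongr; exact l2_opNorm_one_submatrix_le_one (Fin.castSucc_injective b))
    _ = ‖M.submatrix id Fin.castSucc - D‖ := mul_one _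

theorem singVal_add_one_eq_singularValues (M : Matrix (Fin a) (Fin b) ℝ) (i : ℕ) :
    singVal M (i + 1) = (toEuclideanLin M).singularValues i := by
  refine le_antisymm ?_ (le_singVal M i.succ_pos fun D hD => ?_)
  · obtain ⟨D, hD, hle⟩ := (toEuclideanLin M).exists_finrank_range_le_opNorm_sub_le i
    refine (singVal_le_l2_opNorm_sub M (D := toEuclideanLin.symm D) ?_).trans ?_
    · rw [rank_eq_finrank_range_toEuclideanLin, LinearEquiv.apply_symm_apply]
      omega
    · rwa [l2_opNorm_sub_eq_opNorm_toEuclideanLin_sub, LinearEquiv.apply_symm_apply]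
  · rw [l2_opNorm_sub_eq_opNorm_toEuclideanLin_sub]
    refine (toEuclideanLin M).singularValues_le_opNorm_sub _ ?_
    rw [← rank_eq_finrank_range_toEuclideanLin]
    omega

theorem isRoot_charpoly_transpose_mul_self_singVal_sq (M : Matrix (Fin a) (Fin b) ℝ) {i : ℕ}
    (hi : i < b) : (Mᵀ * M).charpoly.IsRoot (singVal M (i + 1) ^ 2) := by
  have := (toEuclideanLin M).hasEigenvalue_adjoint_comp_self_sq_singularValues
    (by rwa [finrank_euclideanSpace_fin])
  rw [← toEuclideanLin_conjTranspose_eq_adjoint, ← toLpLin_mul_same,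
    Module.End.hasEigenvalue_iff_isRoot_charpoly, charpoly_toEuclideanLin,
    conjTranspose_eq_transpose_of_trivial] at this
  rwa [singVal_add_one_eq_singularValues]

end SingVal

namespace Matrix

open Polynomial

variable {R : Type*} [CommRing R]

def symmTridiagonal (a b : ℕ → R) (n : ℕ) : Matrix (Fin n) (Fin n) R :=
  of fun p q =>
    if (p : ℕ) = q then a p
    else if (p : ℕ) + 1 = q then b p
    else if (q : ℕ) + 1 = p then b q
    else 0

def lowerBidiagonal (α β : ℕ → R) (n : ℕ) : Matrix (Fin (n + 1)) (Fin n) R :=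
  of fun i j => if (i : ℕ) = j then α j else if (i : ℕ) = j + 1 then β j else 0

section SymmTridiagonal

variable (a b : ℕ → R) {n : ℕ}

theorem symmTridiagonal_apply_self (p : Fin n) : symmTridiagonal a b n p p = a p := by
  simp [symmTridiagonal]

theorem symmTridiagonal_apply_of_add_one_eq {p q : Fin n} (h : (p : ℕ) + 1 = q) :
    symmTridiagonal a b n p q = b p := by
  simp only [symmTridiagonal, of_apply]
  rw [if_neg (by omega), if_pos h]

theorem symmTridiagonal_apply_of_eq_add_one {p q : Fin n} (h : (p : ℕ) = q + 1) :
    symmTridiagonal a b n p q = b q := by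
  simp only [symmTridiagonal, of_apply]
  rw [if_neg (by omega), if_neg (by omega), if_pos h.symm]

theorem symmTridiagonal_apply_eq_zero {p q : Fin n} (h : (p : ℕ) + 1 < q ∨ (q : ℕ) + 1 < p) :
    symmTridiagonal a b n p q = 0 := by
  simp only [symmTridiagonal, of_apply]
  split_ifs <;> first | rfl | omega

variable (n)

theorem symmTridiagonal_submatrix_castSucc :
    (symmTridiagonal a b (n + 1)).submatrix Fin.castSucc Fin.castSucc = symmTridiagonal a b n :=
  rfl

theorem det_symmTridiagonal_submatrix_castSucc_succAbove :
    ((symmTridiagonal a b (n + 2)).submatrix Fin.castSucc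
      (Fin.last n).castSucc.succAbove).det = b n * (symmTridiagonal a b n).det := by
  have hlast : (Fin.last n).castSucc.succAbove (Fin.last n) = Fin.last (n + 1) := by
    simp [Fin.succAbove_of_le_castSucc]
  have hcast : (Fin.last n).castSucc.succAbove ∘ Fin.castSucc = Fin.castSucc ∘ Fin.castSucc := by
    ext q
    simp [Fin.succAbove_of_castSucc_lt, Fin.castSucc_lt_castSucc_iff]
  have hzero (p : Fin n) :
      symmTridiagonal a b (n + 2) p.castSucc.castSucc (Fin.last (n + 1)) = 0 :=
    symmTridiagonal_apply_eq_zero a b (Or.inl (by simp))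
  rw [det_succ_column _ (Fin.last _), Fin.sum_univ_castSucc]
  simp only [submatrix_apply, hlast, hzero, mul_zero, zero_mul, Finset.sum_const_zero, zero_add,
    Fin.succAbove_last, submatrix_submatrix,
    symmTridiagonal_apply_of_add_one_eq a b (p := (Fin.last n).castSucc) (q := Fin.last (n + 1))
      rfl]
  rw [hcast, ← submatrix_submatrix, symmTridiagonal_submatrix_castSucc,
    symmTridiagonal_submatrix_castSucc]
  simp

theorem det_symmTridiagonal_add_two :
    (symmTridiagonal a b (n + 2)).det =
      a (n + 1) * (symmTridiagonal a b (n + 1)).det - b n ^ 2 * (symmTridiagonal a b n).det := by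
  have hzero (q : Fin n) :
      symmTridiagonal a b (n + 2) (Fin.last (n + 1)) q.castSucc.castSucc = 0 :=
    symmTridiagonal_apply_eq_zero a b (Or.inr (by simp))
  rw [det_succ_row _ (Fin.last _), Fin.sum_univ_castSucc, Fin.sum_univ_castSucc]
  simp only [hzero, mul_zero, zero_mul, Finset.sum_const_zero, zero_add,
    Fin.succAbove_last, det_symmTridiagonal_submatrix_castSucc_succAbove,
    symmTridiagonal_submatrix_castSucc, symmTridiagonal_apply_self,
    symmTridiagonal_apply_of_eq_add_one a b (p := Fin.last (n + 1)) (q := (Fin.last n).castSucc)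
      rfl]
  simp only [Fin.val_last, Fin.val_castSucc, odd_add_one_self, Odd.neg_one_pow, Even.add_self,
    Even.neg_pow, one_pow]
  ring

theorem charmatrix_symmTridiagonal :
    charmatrix (symmTridiagonal a b n) =
      symmTridiagonal (fun i => X - C (a i)) (fun i => -C (b i)) n := by
  ext p q
  rcases eq_or_ne p q with rfl | hpq
  · simp [symmTridiagonal_apply_self]
  · rw [charmatrix_apply_ne _ _ _ hpq]
    simp only [symmTridiagonal, of_apply, if_neg (Fin.val_ne_of_ne hpq)]
    split_ifs <;> simp

theorem charpoly_symmTridiagonal_add_two :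
    (symmTridiagonal a b (n + 2)).charpoly =
      (X - C (a (n + 1))) * (symmTridiagonal a b (n + 1)).charpoly -
        C (b n ^ 2) * (symmTridiagonal a b n).charpoly := by
  simp only [charpoly, charmatrix_symmTridiagonal, det_symmTridiagonal_add_two, map_pow, neg_sq]

theorem not_isRoot_charpoly_symmTridiagonal_succ_of_isRoot [IsDomain R] {n : ℕ}
    (hb : ∀ i < n, b i ≠ 0) {x : R} (hx : (symmTridiagonal a b n).charpoly.IsRoot x) :
    ¬ (symmTridiagonal a b (n + 1)).charpoly.IsRoot x := by
  induction n with
  | zero => simp at hx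
  | succ n ih =>
    intro hx'
    have hprev : (symmTridiagonal a b n).charpoly.IsRoot x := by
      rw [IsRoot.def, charpoly_symmTridiagonal_add_two, eval_sub, eval_mul, eval_mul, hx.eq_zero,
        mul_zero, zero_sub, neg_eq_zero, eval_C] at hx'
      exact (mul_eq_zero.1 hx').resolve_left (pow_ne_zero 2 (hb n n.lt_succ_self))
    exact ih (fun i hi => hb i (by omega)) hprev hx

end SymmTridiagonal

section LowerBidiagonal

variable (α β : ℕ → R) (n : ℕ)

theorem lowerBidiagonal_apply (i : Fin (n + 1)) (j : Fin n) :
    lowerBidiagonal α β n i j =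
      (if i = j.castSucc then α j else 0) + (if i = j.succ then β j else 0) := by
  simp only [lowerBidiagonal, of_apply, Fin.ext_iff, Fin.val_castSucc, Fin.val_succ]
  split_ifs <;> first | omega | simp

theorem transpose_mul_lowerBidiagonal :
    (lowerBidiagonal α β n)ᵀ * lowerBidiagonal α β n =
      symmTridiagonal (fun i => α i ^ 2 + β i ^ 2) (fun i => β i * α (i + 1)) n := by
  ext ⟨p, hp⟩ ⟨q, hq⟩
  simp only [mul_apply, transpose_apply, lowerBidiagonal_apply, add_mul, mul_add,
    Finset.sum_add_distrib, ite_mul, mul_ite, zero_mul, mul_zero, Finset.sum_ite_eq',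
    Finset.mem_univ, if_true]
  simp only [symmTridiagonal, of_apply, Fin.ext_iff, Fin.val_castSucc, Fin.val_succ]
  split_ifs <;> first | omega | (subst_vars; ring)

theorem lowerBidiagonal_submatrix_castSucc :
    (lowerBidiagonal α β (n + 1)).submatrix Fin.castSucc Fin.castSucc = lowerBidiagonal α β n :=
  rfl

theorem lowerBidiagonal_submatrix_id_castSucc :
    (lowerBidiagonal α β (n + 1)).submatrix id Fin.castSucc =
      (1 : Matrix (Fin (n + 2)) (Fin (n + 2)) R).submatrix id Fin.castSucc *
        lowerBidiagonal α β n := by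
  ext i j
  induction i using Fin.lastCases with
  | last =>
    have := j.isLt
    simp only [lowerBidiagonal, submatrix_apply, id_eq, of_apply, Fin.val_last, Fin.val_castSucc,
      Nat.add_right_cancel_iff, mul_apply, ne_eq, (Fin.castSucc_ne_last _).symm, not_false_eq_true,
      one_apply_ne, mul_ite, zero_mul, mul_zero, ite_self, Finset.sum_const_zero]
    rw [if_neg (by omega), if_neg (by omega)]
  | cast i =>
    simp only [submatrix_apply, id_eq, mul_apply, one_apply, Fin.castSucc_inj, ite_mul, one_mul,
      zero_mul, Finset.sum_ite_eq, Finset.mem_univ, if_true]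
    rfl

end LowerBidiagonal

end Matrix

section Interlacing

variable (α β : ℕ → ℝ)

theorem singVal_lowerBidiagonal_le_succ (n i : ℕ) :
    singVal (lowerBidiagonal α β n) (i + 1) ≤ singVal (lowerBidiagonal α β (n + 1)) (i + 1) := by
  have h := singVal_submatrix_le (lowerBidiagonal α β (n + 1)) (r := Fin.castSucc)
    (c := Fin.castSucc) (Fin.castSucc_injective _) (Fin.castSucc_injective _) i.succ_pos
  rwa [lowerBidiagonal_submatrix_castSucc] at h

theorem singVal_lowerBidiagonal_succ_le (n i : ℕ) :
    singVal (lowerBidiagonal α β (n + 1)) (i + 2) ≤ singVal (lowerBidiagonal α β n) (i + 1) := by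
  have hU :=
    transpose_one_submatrix_id_mul (R := ℝ) (n := Fin (n + 2)) (Fin.castSucc_injective (n + 1))
  calc singVal (lowerBidiagonal α β (n + 1)) (i + 1 + 1)
      ≤ singVal ((lowerBidiagonal α β (n + 1)).submatrix id Fin.castSucc) (i + 1) :=
        singVal_add_one_le_singVal_submatrix_castSucc _ i.succ_pos
    _ = singVal (lowerBidiagonal α β n) (i + 1) := by
        have h := singVal_mul_mul_transpose hU (V := 1) (by rw [transpose_one, Matrix.mul_one])
          (lowerBidiagonal α β n) i.succ_pos
        rwa [transpose_one, Matrix.mul_one, ← lowerBidiagonal_submatrix_id_castSucc] at h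

theorem isRoot_charpoly_symmTridiagonal_singVal_lowerBidiagonal_sq {n i : ℕ} (hi : i < n) :
    (symmTridiagonal (fun i => α i ^ 2 + β i ^ 2) (fun i => β i * α (i + 1)) n).charpoly.IsRoot
      (singVal (lowerBidiagonal α β n) (i + 1) ^ 2) := by
  rw [← transpose_mul_lowerBidiagonal]
  exact isRoot_charpoly_transpose_mul_self_singVal_sq _ hi

theorem singVal_lowerBidiagonal_ne_succ {n : ℕ} (hα : ∀ j ≤ n, α j ≠ 0) (hβ : ∀ j < n, β j ≠ 0)
    {i i' : ℕ} (hi : i < n) (hi' : i' < n + 1) :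
    singVal (lowerBidiagonal α β n) (i + 1) ≠ singVal (lowerBidiagonal α β (n + 1)) (i' + 1) := by
  intro h
  refine not_isRoot_charpoly_symmTridiagonal_succ_of_isRoot _ _
    (fun j hj => mul_ne_zero (hβ j hj) (hα (j + 1) hj))
    (isRoot_charpoly_symmTridiagonal_singVal_lowerBidiagonal_sq α β hi) ?_
  rw [h]
  exact isRoot_charpoly_symmTridiagonal_singVal_lowerBidiagonal_sq α β hi'

theorem singVal_lowerBidiagonal_succ_strictly_interlace {n : ℕ} (hα : ∀ j ≤ n, α j ≠ 0)
    (hβ : ∀ j < n, β j ≠ 0) {i : ℕ} (hi : i < n) :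
    singVal (lowerBidiagonal α β (n + 1)) (i + 2) < singVal (lowerBidiagonal α β n) (i + 1) ∧
      singVal (lowerBidiagonal α β n) (i + 1) < singVal (lowerBidiagonal α β (n + 1)) (i + 1) :=
  ⟨(singVal_lowerBidiagonal_succ_le α β n i).lt_of_ne
      (singVal_lowerBidiagonal_ne_succ α β hα hβ hi (by omega)).symm,
    (singVal_lowerBidiagonal_le_succ α β n i).lt_of_ne
      (singVal_lowerBidiagonal_ne_succ α β hα hβ hi (by omega))⟩

theorem singVal_lowerBidiagonal_strictly_interlace {k l : ℕ} (hkl : k < l)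
    (hα : ∀ j < l, α j ≠ 0) (hβ : ∀ j < l, β j ≠ 0) {i : ℕ} (hi : i < k) :
    singVal (lowerBidiagonal α β l) (l - k + i + 1) < singVal (lowerBidiagonal α β k) (i + 1) ∧
      singVal (lowerBidiagonal α β k) (i + 1) < singVal (lowerBidiagonal α β l) (i + 1) := by
  induction l, hkl using Nat.le_induction with
  | base =>
    rw [show k.succ - k + i + 1 = i + 2 by omega]
    exact singVal_lowerBidiagonal_succ_strictly_interlace α β (fun j hj => hα j (by omega))
      (fun j hj => hβ j (by omega)) hi
  | succ l hkl ih =>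
    obtain ⟨ih_lower, ih_upper⟩ :=
      ih (fun j hj => hα j (by omega)) (fun j hj => hβ j (by omega))
    have step := fun {i'} (hi' : i' < l) => singVal_lowerBidiagonal_succ_strictly_interlace α β
      (fun j hj => hα j (by omega)) (fun j hj => hβ j (by omega)) hi'
    refine ⟨?_, ih_upper.trans (step (by omega)).2⟩
    rw [show l + 1 - k + i + 1 = l - k + i + 2 by omega]
    exact (step (by omega)).1.trans ih_lower

end Interlacing

/-- the singular values of `B_k` strictly interlace those of `A`:
`σ_{n-k+i} < θ_i^{(k)} < σ_i` for `1 ≤ i ≤ k`, `1 ≤ k ≤ n-1`. -/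
theorem singularValues_Bk_strictly_interlace_singularValues_A
    (m n : ℕ)
    (A : Matrix (Fin m) (Fin n) ℝ)
    (P : Matrix (Fin m) (Fin (n + 1)) ℝ) (hP : Pᵀ * P = 1)
    (Q : Matrix (Fin n) (Fin n) ℝ) (hQ : Qᵀ * Q = 1)
    (α : Fin n → ℝ) (hα : ∀ i, 0 < α i)
    (β : Fin n → ℝ) (hβ : ∀ i, 0 < β i)
    (B : Matrix (Fin (n + 1)) (Fin n) ℝ)
    (hB : ∀ (i : Fin (n + 1)) (j : Fin n),
      B i j = if (i : ℕ) = (j : ℕ) then α j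
        else if (i : ℕ) = (j : ℕ) + 1 then β j else 0)
    (hA : A = P * B * Qᵀ)
    (σ : Fin n → ℝ)
    (hσ : ∀ i : Fin n, σ i = singVal A ((i : ℕ) + 1))
    (k : ℕ) (hk2 : k ≤ n - 1) :
    ∀ i : Fin k,
      σ ⟨n - k + (i : ℕ), by have := i.2; omega⟩ <
          singVal (subUL B (k + 1) k (by omega) (by omega)) ((i : ℕ) + 1) ∧
        singVal (subUL B (k + 1) k (by omega) (by omega)) ((i : ℕ) + 1) <
          σ ⟨(i : ℕ), by have := i.2; omega⟩ := by
  intro i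
  set a : ℕ → ℝ := fun j => if h : j < n then α ⟨j, h⟩ else 0
  set b : ℕ → ℝ := fun j => if h : j < n then β ⟨j, h⟩ else 0
  have hB_eq : B = lowerBidiagonal a b n := by
    ext r c
    simp [hB, lowerBidiagonal, a, b]
  have hBk_eq : subUL B (k + 1) k (by omega) (by omega) = lowerBidiagonal a b k := by
    ext r c
    simp [subUL, hB, lowerBidiagonal, a, b, show (c : ℕ) < n by omega]
  have hσ_eq (j : Fin n) : σ j = singVal (lowerBidiagonal a b n) (j + 1) := by
    rw [hσ, hA, singVal_mul_mul_transpose hP hQ B (Nat.succ_pos _), hB_eq]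
  have ha : ∀ j < n, a j ≠ 0 := fun j hj => by simp [a, hj, (hα _).ne']
  have hb : ∀ j < n, b j ≠ 0 := fun j hj => by simp [b, hj, (hβ _).ne']
  rw [hBk_eq, hσ_eq, hσ_eq]
  exact singVal_lowerBidiagonal_strictly_interlace a b (by have := i.2; omega) ha hb i.2
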